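/- Let Φ = {f_i(x) = A_i x + t_i}_{i∈𝒜} be an affine IFS on ℝ² with attractor X, 1 < s ≤ 2, and define h(ī) = ∫ H^{s−1}_∞(X ∩ proj_{V(ī)}^{-1}(t)) dλ(t) for the Furstenberg direction V(ī). Then h(ī) ≤ (𝓛h)(ī) = Σ_{k∈𝒜} ‖A_k*|_{V(ī)}‖ · ‖A_k|_{V(kī)^⊥}‖^{s−1} · h(kī) for all ī ∈ Σ. -/

import Mathlib

open MeasureTheory Set ContinuousLinearMap
open scoped ENNReal RealInnerProductSpace

noncomputable section

abbrev E2 := EuclideanSpace ℝ (Fin 2)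

/-- The `s`-dimensional Hausdorff content. -/
noncomputable def hausdorffContent (s : ℝ) (A : Set E2) : ℝ≥0∞ :=
  ⨅ (U : ℕ → Set E2) (_ : A ⊆ ⋃ n, U n), ∑' n, EMetric.diam (U n) ^ s

/-- Rotation of a planar vector by 90 degrees; for a unit vector `v` it spans the
orthogonal complement of the line spanned by `v`. -/
noncomputable def perp2 (v : E2) : E2 :=
  (WithLp.equiv 2 (Fin 2 → ℝ)).symm ![-(v 1), v 0]

/-- Prepending a symbol: `consW k ī = kī`. -/
def consW {ι : Type} (k : ι) (ib : ℕ → ι) : ℕ → ι := fun n => Nat.casesOn n k ib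

/-- Product of matrices along a finite word. -/
noncomputable def wordProd {ι : Type} (A : ι → E2 ≃L[ℝ] E2) (w : List ι) : E2 ≃L[ℝ] E2 :=
  (w.map A).prod

/-!
Every point of `X` on the line `⟪V(ī), x⟫ = t` lies in some `f_k(X)`, and
`f_k(X) ∩ {⟪V(ī), x⟫ = t}` is the `f_k`-image of the slice of `X` by the line
`⟪V(kī), y⟫ = (t - ⟪V(ī), t_k⟫) / c_k`, where `A_k* V(ī) = c_k V(kī)`. On that line `f_k`
multiplies distances by exactly `‖A_k (V(kī)^⊥)‖`, so the `(s-1)`-content of the slice is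
multiplied by that factor to the power `s - 1`. Integrating over `t` and substituting
`u = (t - ⟪V(ī), t_k⟫) / c_k` produces the Jacobian `c_k = ‖A_k* V(ī)‖`. The integrands are
measurable because the content of the slices of a compact set is upper semicontinuous in `t`.
-/

open scoped NNReal Topology

section

variable {sp : ℝ}

lemma hausdorffContent_eq_iInf (sp : ℝ) (B : Set E2) :
    hausdorffContent sp B =
      ⨅ (U : ℕ → Set E2) (_ : B ⊆ ⋃ n, U n), ∑' n, Metric.ediam (U n) ^ sp := rfl

lemma hausdorffContent_eq_ofFunction (hsp : 0 < sp) (B : Set E2) :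
    hausdorffContent sp B =
      OuterMeasure.ofFunction (fun U : Set E2 => Metric.ediam U ^ sp)
        (by rw [Metric.ediam_empty, ENNReal.zero_rpow_of_pos hsp]) B := rfl

lemma hausdorffContent_iUnion_le {κ : Type*} [Fintype κ] (hsp : 0 < sp) (S : κ → Set E2) :
    hausdorffContent sp (⋃ k, S k) ≤ ∑ k, hausdorffContent sp (S k) := by
  simpa only [hausdorffContent_eq_ofFunction hsp] using measure_iUnion_fintype_le _ S

lemma hausdorffContent_image_le (hsp : 0 < sp) {S : Set E2} {f : E2 → E2} {K : ℝ≥0}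
    (hK : K ≠ 0) (hf : LipschitzOnWith K f S) :
    hausdorffContent sp (f '' S) ≤ (K : ℝ≥0∞) ^ sp * hausdorffContent sp S := by
  have hK0 : (K : ℝ≥0∞) ^ sp ≠ 0 := by positivity
  have hKtop : (K : ℝ≥0∞) ^ sp ≠ ∞ := ENNReal.rpow_ne_top_of_nonneg hsp.le ENNReal.coe_ne_top
  simp only [hausdorffContent_eq_iInf, ENNReal.mul_iInf_of_ne hK0 hKtop,
    ← ENNReal.tsum_mul_left]
  refine le_iInf₂ fun U hU => (iInf₂_le (fun n => f '' (U n ∩ S)) ?_).trans ?_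
  · rw [← image_iUnion, ← iUnion_inter]
    exact image_mono (subset_inter hU subset_rfl)
  · refine ENNReal.tsum_le_tsum fun n => ?_
    rw [← ENNReal.mul_rpow_of_nonneg _ _ hsp.le]
    refine ENNReal.rpow_le_rpow (Metric.ediam_image_le_iff.2 fun x hx y hy => ?_) hsp.le
    exact (hf hx.2 hy.2).trans (by gcongr; exact Metric.edist_le_ediam_of_mem hx.1 hy.1)

lemma hausdorffContent_inter_le_sum {κ : Type*} [Fintype κ] (hsp : 0 < sp) {X : Set E2}
    {Y : κ → Set E2} (hX : X = ⋃ k, Y k) (S : Set E2) :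
    hausdorffContent sp (X ∩ S) ≤ ∑ k, hausdorffContent sp (Y k ∩ S) := by
  rw [hX, iUnion_inter]
  exact hausdorffContent_iUnion_le hsp _

lemma exists_pos_ediam_thickening_rpow_le (hsp : 0 < sp) (U : Set E2) {q : ℝ≥0}
    (hq : 0 < q) :
    ∃ δ : ℝ≥0, 0 < δ ∧
      Metric.ediam (Metric.thickening δ U) ^ sp ≤ Metric.ediam U ^ sp + q := by
  by_cases hU : Metric.ediam U = ∞
  · exact ⟨1, one_pos, by simp [hU, ENNReal.top_rpow_of_pos hsp]⟩
  have hcont : Continuous fun δ : ℝ≥0 => (Metric.ediam U + 2 * (δ : ℝ≥0∞)) ^ sp :=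
    ENNReal.continuous_rpow_const.comp <| continuous_const.add <|
      (ENNReal.continuous_const_mul ENNReal.ofNat_ne_top).comp ENNReal.continuous_coe
  have hlt : Metric.ediam U ^ sp < Metric.ediam U ^ sp + q :=
    ENNReal.lt_add_right (ENNReal.rpow_ne_top_of_nonneg hsp.le hU) (by simpa using hq.ne')
  have hnear := (hcont.tendsto 0).eventually (gt_mem_nhds (by simpa using hlt))
  obtain ⟨δ, hδU, hδ⟩ := ((hnear.filter_mono nhdsWithin_le_nhds).and
    (self_mem_nhdsWithin (s := Ioi 0))).exists
  exact ⟨δ, hδ, (ENNReal.rpow_le_rpow (Metric.ediam_thickening_le δ) hsp.le).trans hδU.le⟩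

lemma exists_isOpen_superset_forall_hausdorffContent_lt (hsp : 0 < sp) {B : Set E2}
    {a : ℝ≥0∞} (hB : hausdorffContent sp B < a) :
    ∃ W, IsOpen W ∧ B ⊆ W ∧ ∀ C ⊆ W, hausdorffContent sp C < a := by
  obtain ⟨U, hBU, hUa⟩ :
      ∃ U : ℕ → Set E2, B ⊆ ⋃ n, U n ∧ ∑' n, Metric.ediam (U n) ^ sp < a := by
    simpa only [hausdorffContent_eq_iInf, iInf_lt_iff, exists_prop] using hB
  obtain ⟨r, hr, hra⟩ := ENNReal.lt_iff_exists_add_pos_lt.1 hUa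
  obtain ⟨q, hq, hqr⟩ := ENNReal.exists_pos_sum_of_countable (ENNReal.coe_ne_zero.2 hr.ne') ℕ
  choose δ hδ hδU using fun n => exists_pos_ediam_thickening_rpow_le hsp (U n) (hq n)
  refine ⟨⋃ n, Metric.thickening (δ n) (U n), isOpen_iUnion fun n => Metric.isOpen_thickening,
    hBU.trans (iUnion_mono fun n => Metric.self_subset_thickening (mod_cast hδ n) _),
    fun C hC => ?_⟩
  calc hausdorffContent sp C
      ≤ ∑' n, Metric.ediam (Metric.thickening (δ n) (U n)) ^ sp :=
        iInf₂_le (fun n => Metric.thickening (δ n) (U n)) hC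
    _ ≤ ∑' n, (Metric.ediam (U n) ^ sp + q n) := ENNReal.tsum_le_tsum hδU
    _ = ∑' n, Metric.ediam (U n) ^ sp + ∑' n, (q n : ℝ≥0∞) := ENNReal.tsum_add
    _ < a := (add_le_add_right hqr.le _).trans_lt hra

lemma eventually_inter_fiber_subset {α β : Type*} [TopologicalSpace α] [TopologicalSpace β]
    [T2Space β] {K W : Set α} (hK : IsCompact K) (hW : IsOpen W) {g : α → β}
    (hg : Continuous g) {t : β} (h : K ∩ {x | g x = t} ⊆ W) :
    ∀ᶠ t' in 𝓝 t, K ∩ {x | g x = t'} ⊆ W := by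
  have ht : t ∉ g '' (K \ W) := by
    rintro ⟨x, ⟨hxK, hxW⟩, rfl⟩
    exact hxW (h ⟨hxK, rfl⟩)
  filter_upwards [((hK.diff hW).image hg).isClosed.isOpen_compl.mem_nhds ht]
    with t' ht' x ⟨hxK, hx⟩
  by_contra hxW
  exact ht' ⟨x, ⟨hxK, hxW⟩, hx⟩

lemma upperSemicontinuous_hausdorffContent_inter_fiber {β : Type*} [TopologicalSpace β]
    [T2Space β] (hsp : 0 < sp) {K : Set E2} (hK : IsCompact K) {g : E2 → β}
    (hg : Continuous g) :
    UpperSemicontinuous fun t => hausdorffContent sp (K ∩ {x | g x = t}) := fun t a ha => by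
  obtain ⟨W, hW, hKW, hWa⟩ := exists_isOpen_superset_forall_hausdorffContent_lt hsp ha
  filter_upwards [eventually_inter_fiber_subset hK hW hg hKW] with t' ht' using hWa _ ht'

lemma lintegral_comp_sub_div (g : ℝ → ℝ≥0∞) {c : ℝ} (hc : 0 < c) (b : ℝ) :
    ∫⁻ t, g ((t - b) / c) = ENNReal.ofReal c * ∫⁻ u, g u := by
  rw [lintegral_sub_right_eq_self (fun t => g (t / c)) b]
  have hc' : c⁻¹ ≠ 0 := inv_ne_zero hc.ne'
  calc ∫⁻ t, g (t / c) = ∫⁻ u, g u ∂volume.map (c⁻¹ * ·) := by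
        rw [← MeasurableEquiv.coe_mulLeft₀ hc', lintegral_map_equiv]
        simp [div_eq_inv_mul]
    _ = ENNReal.ofReal c * ∫⁻ u, g u := by
        rw [Real.map_volume_mul_left hc', lintegral_smul_measure, inv_inv, abs_of_pos hc,
          smul_eq_mul]

lemma preimage_affine_setOf_inner_eq {E F : Type*} [NormedAddCommGroup E]
    [InnerProductSpace ℝ E] [CompleteSpace E] [NormedAddCommGroup F] [InnerProductSpace ℝ F]
    [CompleteSpace F] (A : E →L[ℝ] F) (b : F) {v : F} {w : E} {c : ℝ} (hc : c ≠ 0)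
    (hA : adjoint A v = c • w) (t : ℝ) :
    (fun x => A x + b) ⁻¹' {x | ⟪v, x⟫ = t} = {y | ⟪w, y⟫ = (t - ⟪v, b⟫) / c} := by
  ext y
  simp only [mem_preimage, mem_ofPred_eq, inner_add_right, ← adjoint_inner_left, hA,
    real_inner_smul_left, eq_div_iff hc]
  constructor <;> intro h <;> linarith

lemma perp2_apply_zero (v : E2) : perp2 v 0 = -v 1 := rfl

lemma perp2_apply_one (v : E2) : perp2 v 1 = v 0 := rfl

lemma inner_E2_eq (x y : E2) : ⟪x, y⟫ = x 0 * y 0 + x 1 * y 1 := by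
  simp only [PiLp.inner_apply, RCLike.inner_apply, conj_trivial, Fin.sum_univ_two, mul_comm]

lemma norm_perp2 (v : E2) : ‖perp2 v‖ = ‖v‖ := by
  simp only [EuclideanSpace.norm_eq, Fin.sum_univ_two, perp2_apply_zero, perp2_apply_one,
    norm_neg, add_comm]

lemma eq_inner_perp2_smul_perp2 {w u : E2} (hw : ‖w‖ = 1) (hu : ⟪w, u⟫ = 0) :
    u = ⟪perp2 w, u⟫ • perp2 w := by
  have hw2 : w 0 * w 0 + w 1 * w 1 = 1 := by
    rw [← inner_E2_eq, real_inner_self_eq_norm_mul_norm, hw, one_mul]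
  rw [inner_E2_eq] at hu
  ext i
  fin_cases i <;>
    simp only [Fin.zero_eta, Fin.mk_one, PiLp.smul_apply, smul_eq_mul, inner_E2_eq,
      perp2_apply_zero, perp2_apply_one]
  · linear_combination -(u 0) * hw2 + w 0 * hu
  · linear_combination -(u 1) * hw2 + w 1 * hu

lemma norm_map_eq_of_inner_eq_zero (A : E2 →L[ℝ] E2) {w u : E2} (hw : ‖w‖ = 1)
    (hu : ⟪w, u⟫ = 0) : ‖A u‖ = ‖A (perp2 w)‖ * ‖u‖ := by
  conv_lhs => rw [eq_inner_perp2_smul_perp2 hw hu]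
  conv_rhs => rw [eq_inner_perp2_smul_perp2 hw hu]
  rw [map_smul, norm_smul, norm_smul, norm_perp2, hw]
  ring

lemma lipschitzOnWith_affine_setOf_inner_eq (A : E2 →L[ℝ] E2) (b : E2) {w : E2}
    (hw : ‖w‖ = 1) (u : ℝ) :
    LipschitzOnWith ‖A (perp2 w)‖₊ (fun x => A x + b) {x | ⟪w, x⟫ = u} := by
  refine LipschitzOnWith.of_dist_le_mul fun x hx y hy => le_of_eq ?_
  have hxy : ⟪w, x - y⟫ = 0 := by
    rw [inner_sub_right, hx.out, hy.out, sub_self]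
  rw [dist_eq_norm, dist_eq_norm, add_sub_add_right_eq_sub, ← map_sub,
    norm_map_eq_of_inner_eq_zero A hw hxy, coe_nnnorm]

lemma hausdorffContent_affine_image_inter_setOf_inner_eq_le (hsp : 0 < sp)
    (A : E2 ≃L[ℝ] E2) (b : E2) {v w : E2} (hw : ‖w‖ = 1) {c : ℝ} (hc : c ≠ 0)
    (hA : adjoint (A : E2 →L[ℝ] E2) v = c • w) (X : Set E2) (t : ℝ) :
    hausdorffContent sp ((fun x => (A : E2 →L[ℝ] E2) x + b) '' X ∩ {x | ⟪v, x⟫ = t}) ≤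
      ENNReal.ofReal ‖(A : E2 →L[ℝ] E2) (perp2 w)‖ ^ sp *
        hausdorffContent sp (X ∩ {y | ⟪w, y⟫ = (t - ⟪v, b⟫) / c}) := by
  have hK : ‖(A : E2 →L[ℝ] E2) (perp2 w)‖₊ ≠ 0 :=
    nnnorm_ne_zero_iff.2 <| (map_ne_zero_iff _ A.injective).2 <|
      norm_ne_zero_iff.1 (by rw [norm_perp2, hw]; exact one_ne_zero)
  rw [← image_inter_preimage, preimage_affine_setOf_inner_eq _ b hc hA, ofReal_norm,
    enorm_eq_nnnorm]
  exact hausdorffContent_image_le hsp hK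
    ((lipschitzOnWith_affine_setOf_inner_eq _ b hw _).mono inter_subset_right)

end

theorem stmt10_general {ι : Type} [Fintype ι]
    (A : ι → E2 ≃L[ℝ] E2) (tr : ι → E2)
    (X : Set E2) (hXc : IsCompact X)
    (hXinv : X = ⋃ i : ι, (fun x => (A i : E2 →L[ℝ] E2) x + tr i) '' X)
    (s : ℝ) (hs1 : 1 < s)
    (V : (ℕ → ι) → E2) (hVunit : ∀ ib, ‖V ib‖ = 1)
    (hVequiv : ∀ ib : ℕ → ι, ∃ c : ℝ, 0 < c ∧
      adjoint (A (ib 0) : E2 →L[ℝ] E2) (V fun n => ib (n + 1)) = c • V ib) :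
    ∀ ib : ℕ → ι,
      (∫⁻ t : ℝ, hausdorffContent (s - 1) (X ∩ {x | ⟪V ib, x⟫ = t}) ∂volume) ≤
        ∑ k : ι,
          ENNReal.ofReal ‖adjoint (A k : E2 →L[ℝ] E2) (V ib)‖ *
            ENNReal.ofReal ‖(A k : E2 →L[ℝ] E2) (perp2 (V (consW k ib)))‖ ^ (s - 1) *
            ∫⁻ t : ℝ, hausdorffContent (s - 1) (X ∩ {x | ⟪V (consW k ib), x⟫ = t}) ∂volume := by
  intro ib
  have hsp : 0 < s - 1 := sub_pos.2 hs1
  have hequiv (k : ι) : ∃ c : ℝ, 0 < c ∧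
      adjoint (A k : E2 →L[ℝ] E2) (V ib) = c • V (consW k ib) := hVequiv (consW k ib)
  choose c hc hAc using hequiv
  have hmeas (w : E2) : Measurable fun t => hausdorffContent (s - 1) (X ∩ {x | ⟪w, x⟫ = t}) :=
    (upperSemicontinuous_hausdorffContent_inter_fiber hsp hXc
      (innerSL ℝ w).continuous).measurable
  have hmeas_slice (k : ι) : Measurable fun t => hausdorffContent (s - 1)
      (X ∩ {x | ⟪V (consW k ib), x⟫ = (t - ⟪V ib, tr k⟫) / c k}) :=
    (hmeas _).comp ((measurable_id.sub_const _).div_const _)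
  calc ∫⁻ t, hausdorffContent (s - 1) (X ∩ {x | ⟪V ib, x⟫ = t})
      ≤ ∫⁻ t, ∑ k, ENNReal.ofReal ‖(A k : E2 →L[ℝ] E2) (perp2 (V (consW k ib)))‖ ^ (s - 1) *
          hausdorffContent (s - 1)
            (X ∩ {x | ⟪V (consW k ib), x⟫ = (t - ⟪V ib, tr k⟫) / c k}) :=
        lintegral_mono fun t => (hausdorffContent_inter_le_sum hsp hXinv _).trans <|
          Finset.sum_le_sum fun k _ => hausdorffContent_affine_image_inter_setOf_inner_eq_le hsp
            (A k) (tr k) (hVunit _) (hc k).ne' (hAc k) X t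
    _ = _ := by
        rw [lintegral_finsetSum _ fun k _ => (hmeas_slice k).const_mul _]
        refine Finset.sum_congr rfl fun k _ => ?_
        rw [lintegral_const_mul _ (hmeas_slice k),
          lintegral_comp_sub_div (fun u => hausdorffContent (s - 1)
            (X ∩ {x | ⟪V (consW k ib), x⟫ = u})) (hc k),
          hAc k, norm_smul, hVunit, mul_one, Real.norm_of_nonneg (hc k).le]
        ring

/-- Let `Φ = {fᵢ(x) = Aᵢx + tᵢ}` be a dominated affine IFS on `ℝ²` with attractor `X`,
`1 < s ≤ 2`, and `V : Σ → ℝP¹` the Furstenberg-direction map (represented by unit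
vectors, equivariant: `A_{i₁}* V(σī) ∥ V(ī)`).  With
`h(ī) = ∫ H^{s−1}_∞ (X ∩ proj_{V(ī)}⁻¹(t)) dλ(t)` one has
`h(ī) ≤ (𝓛h)(ī) = ∑ₖ ‖A_k*|_{V(ī)}‖ ‖A_k|_{V(kī)^⊥}‖^{s−1} h(kī)`. -/
theorem stmt10 {ι : Type} [Fintype ι] [Nonempty ι]
    (A : ι → E2 ≃L[ℝ] E2) (tr : ι → E2)
    (hcontr : ∀ i, ‖(A i : E2 →L[ℝ] E2)‖ < 1)
    (hdom : ∃ C : ℝ, 0 < C ∧ ∃ τ ∈ Set.Ioo (0 : ℝ) 1, ∀ w : List ι, w ≠ [] →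
      ‖((wordProd A w).symm : E2 →L[ℝ] E2)‖⁻¹ ≤
        C * τ ^ w.length * ‖(wordProd A w : E2 →L[ℝ] E2)‖)
    (X : Set E2) (hXc : IsCompact X) (hXne : X.Nonempty)
    (hXinv : X = ⋃ i : ι, (fun x => (A i : E2 →L[ℝ] E2) x + tr i) '' X)
    (s : ℝ) (hs1 : 1 < s) (hs2 : s ≤ 2)
    (V : (ℕ → ι) → E2) (hVunit : ∀ ib, ‖V ib‖ = 1)
    (hVequiv : ∀ ib : ℕ → ι, ∃ c : ℝ, 0 < c ∧
      adjoint (A (ib 0) : E2 →L[ℝ] E2) (V fun n => ib (n + 1)) = c • V ib) :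
    ∀ ib : ℕ → ι,
      (∫⁻ t : ℝ, hausdorffContent (s - 1) (X ∩ {x | ⟪V ib, x⟫ = t}) ∂volume) ≤
        ∑ k : ι,
          ENNReal.ofReal ‖adjoint (A k : E2 →L[ℝ] E2) (V ib)‖ *
            ENNReal.ofReal ‖(A k : E2 →L[ℝ] E2) (perp2 (V (consW k ib)))‖ ^ (s - 1) *
            ∫⁻ t : ℝ, hausdorffContent (s - 1) (X ∩ {x | ⟪V (consW k ib), x⟫ = t}) ∂volume :=
  stmt10_general A tr X hXc hXinv s hs1 V hVunit hVequiv

end
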